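/- arXiv:2402.02458 — 5 statements merged into one kernel-verified Lean document; each statement's English description precedes it below -/
import Mathlib

section
/- Let G be a finite simple graph, let V₁ be a subset of V(G), and let u ∈ V₁. Suppose G contains no edge between V₁ \ {u} and V(G) \ V₁. Let G₁ = G[V₁] and G₂ = G[V(G) \ V₁] be the induced subgraphs. If diss(G₁ − u) = diss(G₁), then diss(G) = diss(G₁) + diss(G₂). -/
open scoped Classical

variable {V : Type*}

/-- The number of neighbors of `v` that lie inside the finite set `s`,
i.e. the degree of `v` in the subgraph induced by `s` (when `v ∈ s`). -/
noncomputable def nbrCount (G : SimpleGraph V) (s : Finset V) (v : V) : ℕ :=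
  {w ∈ (s : Set V) | G.Adj v w}.ncard

/-- `s` is a dissociation set of `G`: the subgraph induced by `s` has maximum degree at most 1. -/
def IsDissoc (G : SimpleGraph V) (s : Finset V) : Prop :=
  ∀ v ∈ s, nbrCount G s v ≤ 1

/-- The dissociation number of the subgraph of `G` induced by `A`. -/
noncomputable def dissNumOn (G : SimpleGraph V) (A : Set V) : ℕ :=
  sSup {n | ∃ s : Finset V, ↑s ⊆ A ∧ IsDissoc G s ∧ s.card = n}

/-- `s` is a maximum dissociation set of the subgraph of `G` induced by `A`. -/
def IsMaxDissocOn (G : SimpleGraph V) (A : Set V) (s : Finset V) : Prop :=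
  ↑s ⊆ A ∧ IsDissoc G s ∧ s.card = dissNumOn G A

/-- The number of maximum dissociation sets of the subgraph of `G` induced by `A`. -/
noncomputable def numMaxDissocOn (G : SimpleGraph V) (A : Set V) : ℕ :=
  Nat.card {s : Finset V // IsMaxDissocOn G A s}

/-- The dissociation number of `G`. -/
noncomputable def dissNum (G : SimpleGraph V) : ℕ :=
  dissNumOn G Set.univ

/-- `s` is a maximum dissociation set of `G`. -/
def IsMaxDissoc (G : SimpleGraph V) (s : Finset V) : Prop :=
  IsMaxDissocOn G Set.univ s

/-- The number `m(G)` of maximum dissociation sets of `G`. -/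
noncomputable def numMaxDissoc (G : SimpleGraph V) : ℕ :=
  numMaxDissocOn G Set.univ

/-- `m(G[A], u⁻)`: maximum dissociation sets of `G[A]` not containing `u`. -/
noncomputable def numMaxDissocOnAway (G : SimpleGraph V) (A : Set V) (u : V) : ℕ :=
  Nat.card {s : Finset V // IsMaxDissocOn G A s ∧ u ∉ s}

/-- `m(G[A], u⁰)`: maximum dissociation sets of `G[A]` containing `u` with induced degree 0. -/
noncomputable def numMaxDissocOnDeg0 (G : SimpleGraph V) (A : Set V) (u : V) : ℕ :=
  Nat.card {s : Finset V // IsMaxDissocOn G A s ∧ u ∈ s ∧ nbrCount G s u = 0}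

/-- `m(G[A], u¹)`: maximum dissociation sets of `G[A]` containing `u` with induced degree 1. -/
noncomputable def numMaxDissocOnDeg1 (G : SimpleGraph V) (A : Set V) (u : V) : ℕ :=
  Nat.card {s : Finset V // IsMaxDissocOn G A s ∧ u ∈ s ∧ nbrCount G s u = 1}

/-- `m(G, u⁻)`. -/
noncomputable def numMaxDissocAway (G : SimpleGraph V) (u : V) : ℕ :=
  numMaxDissocOnAway G Set.univ u

/-- `m(G, u⁰)`. -/
noncomputable def numMaxDissocDeg0 (G : SimpleGraph V) (u : V) : ℕ :=
  numMaxDissocOnDeg0 G Set.univ u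

/-- `m(G, u¹)`. -/
noncomputable def numMaxDissocDeg1 (G : SimpleGraph V) (u : V) : ℕ :=
  numMaxDissocOnDeg1 G Set.univ u

/-- `m̄`: relative count, `numMaxDissocOn G B` if `dissNumOn G B = dissNumOn G A`, else 0. -/
noncomputable def mbar (G : SimpleGraph V) (A B : Set V) : ℕ :=
  if dissNumOn G B = dissNumOn G A then numMaxDissocOn G B else 0

/-- `G` is a potted graph whose (unique) cycle has length `k`: `G` is connected and unicyclic
(equivalently, connected with as many edges as vertices), and its cycle has length `k` and
contains a unique vertex of degree larger than 2. -/
def IsPotted (G : SimpleGraph V) (k : ℕ) : Prop :=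
  G.Connected ∧ G.edgeSet.ncard = Nat.card V ∧
    ∃ (v : V) (c : G.Walk v v), c.IsCycle ∧ c.length = k ∧
      ∃! u, u ∈ c.support ∧ 2 < (G.neighborSet u).ncard

lemma dissSet_bddAbove [Fintype V] (G : SimpleGraph V) (A : Set V) :
    BddAbove {n | ∃ s : Finset V, ↑s ⊆ A ∧ IsDissoc G s ∧ s.card = n} := by
  refine ⟨Fintype.card V, fun n hn => ?_⟩
  obtain ⟨s, _, _, rfl⟩ := hn
  exact Finset.card_le_card (Finset.subset_univ s) |>.trans_eq (Finset.card_univ)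

lemma IsDissoc.subset {G : SimpleGraph V} {s t : Finset V} [Fintype V]
    (hs : IsDissoc G s) (hts : t ⊆ s) : IsDissoc G t := by
  intro v hv
  refine le_trans ?_ (hs v (hts hv))
  exact Set.ncard_le_ncard (fun w hw => ⟨hts hw.1, hw.2⟩) (Set.toFinite _)

lemma le_dissNumOn [Fintype V] {G : SimpleGraph V} {A : Set V} {s : Finset V}
    (hsA : ↑s ⊆ A) (hs : IsDissoc G s) : s.card ≤ dissNumOn G A :=
  le_csSup (dissSet_bddAbove G A) ⟨s, hsA, hs, rfl⟩

lemma exists_max_dissoc [Fintype V] (G : SimpleGraph V) (A : Set V) :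
    ∃ s : Finset V, ↑s ⊆ A ∧ IsDissoc G s ∧ s.card = dissNumOn G A := by
  have hne : {n | ∃ s : Finset V, ↑s ⊆ A ∧ IsDissoc G s ∧ s.card = n}.Nonempty :=
    ⟨0, ∅, by simp, fun v hv => by simp at hv, by simp⟩
  have := Nat.sSup_mem hne (dissSet_bddAbove G A)
  obtain ⟨s, h1, h2, h3⟩ := this
  exact ⟨s, h1, h2, h3⟩

theorem diss_add_of_cut {V : Type*} [Fintype V] (G : SimpleGraph V) (A : Set V) (u : V)
    (hu : u ∈ A)
    (hsep : ∀ a ∈ A, a ≠ u → ∀ b ∉ A, ¬ G.Adj a b)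
    (h : dissNumOn G (A \ {u}) = dissNumOn G A) :
    dissNum G = dissNumOn G A + dissNumOn G Aᶜ := by
  apply le_antisymm
  · -- take a maximum dissociation set of G, split it
    obtain ⟨s, -, hs, hcard⟩ := exists_max_dissoc G Set.univ
    rw [dissNum, ← hcard]
    classical
    have hsplit : s.card = (s.filter (· ∈ A)).card + (s.filter (· ∉ A)).card :=
      (Finset.card_filter_add_card_filter_not (fun x => x ∈ A)).symm
    rw [hsplit]
    gcongr
    · refine le_dissNumOn (fun x hx => ?_) (hs.subset (Finset.filter_subset _ _))
      simp only [Finset.coe_filter, Set.mem_setOf_eq] at hx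
      exact hx.2
    · refine le_dissNumOn (fun x hx => ?_) (hs.subset (Finset.filter_subset _ _))
      simp only [Finset.coe_filter, Set.mem_setOf_eq] at hx
      exact hx.2
  · obtain ⟨s₁, hs₁A, hs₁, hc₁⟩ := exists_max_dissoc G (A \ {u})
    obtain ⟨s₂, hs₂A, hs₂, hc₂⟩ := exists_max_dissoc G Aᶜ
    have hdisj : Disjoint s₁ s₂ := by
      rw [Finset.disjoint_left]
      intro x hx1 hx2
      exact hs₂A hx2 (hs₁A hx1).1
    -- no edges between s₁ and s₂
    have hnoedge : ∀ a ∈ s₁, ∀ b ∈ s₂, ¬ G.Adj a b := by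
      intro a ha b hb
      obtain ⟨haA, hau⟩ := hs₁A ha
      exact hsep a haA hau b (hs₂A hb)
    have hdiss : IsDissoc G (s₁ ∪ s₂) := by
      intro v hv
      rcases Finset.mem_union.mp hv with hv1 | hv2
      · refine le_trans ?_ (hs₁ v hv1)
        apply Set.ncard_le_ncard ?_ (Set.toFinite _)
        rintro w ⟨hw, hadj⟩
        rcases Finset.mem_union.mp (by simpa using hw) with hw1 | hw2
        · exact ⟨by simpa using hw1, hadj⟩
        · exact absurd hadj (hnoedge v hv1 w hw2)
      · refine le_trans ?_ (hs₂ v hv2)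
        apply Set.ncard_le_ncard ?_ (Set.toFinite _)
        rintro w ⟨hw, hadj⟩
        rcases Finset.mem_union.mp (by simpa using hw) with hw1 | hw2
        · exact absurd hadj.symm (hnoedge w hw1 v hv2)
        · exact ⟨by simpa using hw2, hadj⟩
    have hle : (s₁ ∪ s₂).card ≤ dissNum G :=
      le_dissNumOn (by simp) hdiss
    rwa [Finset.card_union_of_disjoint hdisj, hc₁, hc₂, h] at hle
end

section
/- Let G be a finite simple graph and V₁ ⊆ V(G), and suppose diss(G) = diss(G[V₁]) + diss(G − V₁). Then every maximum dissociation set F of G satisfies: F ∩ V₁ is a maximum dissociation set of G[V₁] and F \ V₁ is a maximum dissociation set of G − V₁. Consequently, m(G) ≤ m(G[V₁]) · m(G − V₁). -/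
open scoped Classical

variable {V : Type*}

lemma isDissoc_subset {V : Type*} (G : SimpleGraph V) {s t : Finset V}
    (hts : t ⊆ s) (hs : IsDissoc G s) : IsDissoc G t := by
  intro v hv
  refine le_trans ?_ (hs v (hts hv))
  apply Set.ncard_le_ncard
  · exact fun w hw => ⟨hts hw.1, hw.2⟩
  · exact (s : Set V).toFinite.subset (fun w hw => hw.1)

lemma card_le_dissNumOn {V : Type*} [Fintype V] (G : SimpleGraph V) {A : Set V}
    {s : Finset V} (hsA : ↑s ⊆ A) (hs : IsDissoc G s) : s.card ≤ dissNumOn G A := by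
  apply le_csSup
  · exact ⟨Fintype.card V, fun n ⟨t, _, _, ht⟩ => ht ▸ t.card_le_univ⟩
  · exact ⟨s, hsA, hs, rfl⟩

theorem maxDissoc_split {V : Type*} [Fintype V] (G : SimpleGraph V) (A : Set V)
    (h : dissNum G = dissNumOn G A + dissNumOn G Aᶜ) :
    (∀ s : Finset V, IsMaxDissoc G s →
      IsMaxDissocOn G A (s.filter (· ∈ A)) ∧ IsMaxDissocOn G Aᶜ (s.filter (· ∉ A))) ∧
    numMaxDissoc G ≤ numMaxDissocOn G A * numMaxDissocOn G Aᶜ := by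
  have key : ∀ s : Finset V, IsMaxDissoc G s →
      IsMaxDissocOn G A (s.filter (· ∈ A)) ∧ IsMaxDissocOn G Aᶜ (s.filter (· ∉ A)) := by
    intro s hs
    obtain ⟨-, hd, hc⟩ := hs
    have hA : ((s.filter (· ∈ A)) : Set V) ⊆ A := by
      intro v hv
      simp only [Finset.coe_filter, Set.mem_setOf_eq] at hv
      exact hv.2
    have hAc : ((s.filter (· ∉ A)) : Set V) ⊆ Aᶜ := by
      intro v hv
      simp only [Finset.coe_filter, Set.mem_setOf_eq] at hv
      exact hv.2
    have hdA := isDissoc_subset G (Finset.filter_subset (· ∈ A) s) hd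
    have hdAc := isDissoc_subset G (Finset.filter_subset (· ∉ A) s) hd
    have h1 := card_le_dissNumOn G hA hdA
    have h2 := card_le_dissNumOn G hAc hdAc
    have hsum : (s.filter (· ∈ A)).card + (s.filter (· ∉ A)).card = s.card := by
      classical
      have := Finset.card_filter_add_card_filter_not (s := s) (p := (· ∈ A))
      convert this using 3
    have hcard : s.card = dissNumOn G A + dissNumOn G Aᶜ := by
      rw [hc]; exact h
    refine ⟨⟨hA, hdA, ?_⟩, ⟨hAc, hdAc, ?_⟩⟩ <;> omega
  refine ⟨key, ?_⟩
  have hf : Function.Injective (fun s : {s : Finset V // IsMaxDissoc G s} =>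
      ((⟨s.1.filter (· ∈ A), (key s.1 s.2).1⟩ : {t // IsMaxDissocOn G A t}),
       (⟨s.1.filter (· ∉ A), (key s.1 s.2).2⟩ : {t // IsMaxDissocOn G Aᶜ t}))) := by
    intro s t hst
    simp only [Prod.mk.injEq, Subtype.mk.injEq] at hst
    apply Subtype.ext
    have := Finset.filter_union_filter_not_eq (fun v => v ∈ A) s.1
    have ht := Finset.filter_union_filter_not_eq (fun v => v ∈ A) t.1
    rw [← this, ← ht, hst.1, hst.2]
  calc numMaxDissoc G ≤ Nat.card ({t // IsMaxDissocOn G A t} × {t // IsMaxDissocOn G Aᶜ t}) :=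
        Nat.card_le_card_of_injective _ hf
    _ = numMaxDissocOn G A * numMaxDissocOn G Aᶜ := Nat.card_prod _ _
end

section
/- Define f(x) = 3^{x−1} + x + 1 and g(x) = 3^{x−1}. Let m, l, k₁, …, k_i be positive integers with l ≥ 5, m ≥ l+3, m − l ≡ 1 (mod 3) and k₁ + ⋯ + k_i = (m−l−1)/3. Then (1/3)(l+1)·∏_{j=1}^{i} f(k_j) + ∏_{j=1}^{i} g(k_j) ≤ (1/3)(l+1)·3^{(m−l−1)/3} + 1, with equality if and only if i = (m−l−1)/3 (i.e., k₁ = ⋯ = k_i = 1). -/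
/-- `f(x) = 3^{x-1} + x + 1`. -/
noncomputable def f (x : ℕ) : ℝ := 3 ^ (x - 1) + x + 1

/-- `g(x) = 3^{x-1}`. -/
noncomputable def g (x : ℕ) : ℝ := 3 ^ (x - 1)

lemma natfact (n : ℕ) : n + 2 ≤ 2 * 3 ^ n := by
  induction n with
  | zero => norm_num
  | succ n ih =>
    have h3 : 1 ≤ 3 ^ n := Nat.one_le_pow _ _ (by norm_num)
    rw [pow_succ]; nlinarith

lemma natfact2 (n : ℕ) (h : 1 ≤ n) : n + 2 ≤ 3 ^ n := by
  induction n with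
  | zero => omega
  | succ n ih =>
    rcases Nat.eq_zero_or_pos n with h0 | h1
    · subst h0; norm_num
    · have := ih h1
      have h3 : 1 ≤ 3 ^ n := Nat.one_le_pow _ _ (by norm_num)
      rw [pow_succ]; nlinarith

lemma f_nonneg (x : ℕ) : 0 ≤ f x := by unfold f; positivity

lemma f_le (x : ℕ) (hx : 1 ≤ x) : f x ≤ 3 ^ x := by
  obtain ⟨n, rfl⟩ : ∃ n, x = n + 1 := ⟨x - 1, by omega⟩
  have h := natfact n
  have h' : (n : ℝ) + 2 ≤ 2 * 3 ^ n := by exact_mod_cast h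
  unfold f
  simp only [Nat.add_sub_cancel]
  push_cast
  rw [pow_succ]
  nlinarith

lemma g_one_le (x : ℕ) : (1 : ℝ) ≤ g x := one_le_pow₀ (by norm_num)
open Finset



lemma key {ι : Type*} [DecidableEq ι] (s : Finset ι) (k : ι → ℕ) (hk : ∀ j ∈ s, 1 ≤ k j) :
    (2 * ∏ j ∈ s, f (k j) + ∏ j ∈ s, g (k j) ≤ 2 * 3 ^ (∑ j ∈ s, k j) + 1) ∧
    ((∃ j ∈ s, 2 ≤ k j) →
      2 * ∏ j ∈ s, f (k j) + ∏ j ∈ s, g (k j) < 2 * 3 ^ (∑ j ∈ s, k j) + 1) := by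
  induction s using Finset.cons_induction with
  | empty => simp
  | cons a s ha ih =>
    have hka : 1 ≤ k a := hk a (Finset.mem_cons_self a s)
    have hk' : ∀ j ∈ s, 1 ≤ k j := fun j hj => hk j (Finset.mem_cons_of_mem hj)
    obtain ⟨ih1, ih2⟩ := ih hk'
    set P := ∏ j ∈ s, f (k j) with hPdef
    set Q := ∏ j ∈ s, g (k j) with hQdef
    set S := ∑ j ∈ s, k j with hSdef
    have hP : P ≤ 3 ^ S := by
      calc P ≤ ∏ j ∈ s, (3:ℝ) ^ (k j) :=
            Finset.prod_le_prod (fun j _ => f_nonneg _) (fun j hj => f_le _ (hk' j hj))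
        _ = 3 ^ S := by rw [hSdef, ← Finset.prod_pow_eq_pow_sum]
    have hQ : (1:ℝ) ≤ Q := by
      have := Finset.prod_le_prod (s := s) (f := fun _ => (1:ℝ)) (g := fun j => g (k j))
        (fun _ _ => by norm_num) (fun j _ => g_one_le (k j))
      simpa using this
    have hPpos : 0 ≤ P := Finset.prod_nonneg (fun j _ => f_nonneg _)
    have hT : (1:ℝ) ≤ 3 ^ S := one_le_pow₀ (by norm_num)
    rw [Finset.prod_cons, Finset.prod_cons, Finset.sum_cons]
    rcases Nat.lt_or_ge (k a) 2 with h1 | h2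
    · have hka1 : k a = 1 := by omega
      rw [hka1]
      have hf1 : f 1 = 3 := by norm_num [f]
      have hg1 : g 1 = 1 := by norm_num [g]
      rw [hf1, hg1, pow_add, pow_one]
      constructor
      · nlinarith
      · rintro ⟨j, hj, h2j⟩
        rcases Finset.mem_cons.mp hj with rfl | hjs
        · omega
        · have := ih2 ⟨j, hjs, h2j⟩
          nlinarith
    · obtain ⟨n, hn⟩ : ∃ n, k a = n + 1 := ⟨k a - 1, by omega⟩
      have hn1 : 1 ≤ n := by omega
      have hstrict : 2 * (f (k a) * P) + g (k a) * Q < 2 * 3 ^ (k a + S) + 1 := by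
        rw [hn]
        have hf : f (n + 1) = 3 ^ n + (n + 1 : ℕ) + 1 := by
          unfold f; simp [Nat.add_sub_cancel]
        have hg : g (n + 1) = 3 ^ n := by unfold g; simp [Nat.add_sub_cancel]
        rw [hf, hg]
        have hnf : 2 * ((n : ℝ) + 2) ≤ 3 * 3 ^ n := by
          have := natfact2 n hn1
          have h' : (n : ℝ) + 2 ≤ 3 ^ n := by exact_mod_cast this
          linarith
        have hpn : (1:ℝ) ≤ 3 ^ n := one_le_pow₀ (by norm_num)
        have hint1 : (3:ℝ) ^ n * (2 * P + Q) ≤ 3 ^ n * (2 * 3 ^ S + 1) := by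
          apply mul_le_mul_of_nonneg_left ih1 (by positivity)
        have hint2 : 2 * P * ((n : ℝ) + 2) ≤ 3 * 3 ^ n * 3 ^ S := by
          calc 2 * P * ((n : ℝ) + 2) ≤ 2 * (3:ℝ)^S * ((n:ℝ) + 2) := by nlinarith
            _ ≤ 3 * 3 ^ n * 3 ^ S := by nlinarith
        have hint3 : (3:ℝ) ^ n ≤ 3 ^ n * 3 ^ S := by nlinarith
        have hexp : (3:ℝ) ^ (n + 1 + S) = 3 * 3 ^ n * 3 ^ S := by
          rw [pow_add, pow_succ]; ring
        rw [hexp]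
        push_cast
        nlinarith
      exact ⟨le_of_lt hstrict, fun _ => hstrict⟩
theorem lem_2_9_i (m l i : ℕ) (hl : 5 ≤ l) (hm : l + 3 ≤ m) (hmod : (m - l) % 3 = 1)
    (hi : 1 ≤ i) (k : Fin i → ℕ) (hk : ∀ j, 1 ≤ k j)
    (hsum : ∑ j, k j = (m - l - 1) / 3) :
    ((l : ℝ) + 1) / 3 * ∏ j, f (k j) + ∏ j, g (k j)
        ≤ ((l : ℝ) + 1) / 3 * 3 ^ ((m - l - 1) / 3) + 1 ∧
    (((l : ℝ) + 1) / 3 * ∏ j, f (k j) + ∏ j, g (k j)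
        = ((l : ℝ) + 1) / 3 * 3 ^ ((m - l - 1) / 3) + 1 ↔ i = (m - l - 1) / 3) := by
  set N := (m - l - 1) / 3 with hNdef
  obtain ⟨hle2, hlt⟩ := key Finset.univ k (fun j _ => hk j)
  rw [hsum] at hle2 hlt
  set P := ∏ j, f (k j) with hPdef
  set Q := ∏ j, g (k j) with hQdef
  have hc : (2:ℝ) ≤ ((l:ℝ) + 1) / 3 := by
    have : (5:ℝ) ≤ (l:ℝ) := by exact_mod_cast hl
    linarith
  have hP : P ≤ 3 ^ N := by
    calc P ≤ ∏ j, (3:ℝ) ^ (k j) :=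
          Finset.prod_le_prod (fun j _ => f_nonneg _) (fun j _ => f_le _ (hk j))
      _ = 3 ^ (∑ j, k j) := by rw [← Finset.prod_pow_eq_pow_sum]
      _ = 3 ^ N := by rw [hsum]
  have hQ : (1:ℝ) ≤ Q := by
    have := Finset.prod_le_prod (s := Finset.univ) (f := fun _ : Fin i => (1:ℝ))
      (g := fun j => g (k j)) (fun _ _ => by norm_num) (fun j _ => g_one_le (k j))
    simpa using this
  have hiN : i ≤ N := by
    have h1 : ∑ j : Fin i, 1 ≤ ∑ j, k j := Finset.sum_le_sum (fun j _ => hk j)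
    simpa [hsum] using h1
  have hle : ((l:ℝ) + 1) / 3 * P + Q ≤ ((l:ℝ) + 1) / 3 * 3 ^ N + 1 := by
    nlinarith [mul_nonneg (by linarith : (0:ℝ) ≤ ((l:ℝ) + 1) / 3 - 2)
      (by linarith : (0:ℝ) ≤ (3:ℝ) ^ N - P)]
  refine ⟨hle, ?_, ?_⟩
  · intro heq
    by_contra hne
    have hilt : i < N := lt_of_le_of_ne hiN hne
    have hex : ∃ j ∈ Finset.univ, 2 ≤ k j := by
      by_contra hno
      push_neg at hno
      have hall : ∀ j, k j = 1 := fun j => by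
        have h1 := hk j; have h2 := hno j (Finset.mem_univ j); omega
      have : ∑ j, k j = i := by simp [hall]
      omega
    have hstrict := hlt hex
    nlinarith [mul_nonneg (by linarith : (0:ℝ) ≤ ((l:ℝ) + 1) / 3 - 2)
      (by linarith : (0:ℝ) ≤ (3:ℝ) ^ N - P)]
  · intro hiN'
    have hall : ∀ j, k j = 1 := by
      by_contra hno
      push_neg at hno
      obtain ⟨j0, hj0⟩ := hno
      have h2 : 2 ≤ k j0 := by have := hk j0; omega
      have : ∑ j : Fin i, 1 < ∑ j, k j :=
        Finset.sum_lt_sum (fun j _ => hk j) ⟨j0, Finset.mem_univ _, h2⟩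
      simp [hsum] at this
      omega
    have hPf : P = 3 ^ N := by
      rw [hPdef]
      have : ∀ j : Fin i, f (k j) = 3 := fun j => by rw [hall j]; norm_num [f]
      rw [Finset.prod_congr rfl (fun j _ => this j)]
      simp [Finset.prod_const, ← hiN']
    have hQf : Q = 1 := by
      rw [hQdef]
      have : ∀ j : Fin i, g (k j) = 1 := fun j => by rw [hall j]; norm_num [g]
      rw [Finset.prod_congr rfl (fun j _ => this j)]
      simp
    rw [hPf, hQf]
end

section
/- Define f(x) = 3^{x−1} + x + 1 and g(x) = 3^{x−1}. Let m, l, k₁, …, k_i be positive integers with l ≥ 4, m ≥ l+3, m − l ≡ 1 (mod 3) and k₁ + ⋯ + k_i = (m−l−1)/3. Then (1/18)(l+2)(l+5)·∏_{j=1}^{i} f(k_j) + (1/3)(l−1)·∏_{j=1}^{i} g(k_j) ≤ (1/18)(l+2)(l+5)·3^{(m−l−1)/3} + (1/3)(l−1), with equality if and only if i = (m−l−1)/3. -/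
lemma nat_le_pow (n : ℕ) (h : 1 ≤ n) : n ≤ 3 ^ (n - 1) := by
  have := Nat.lt_pow_self (a := 3) (n := n - 1) (by norm_num)
  omega

lemma nat_lt_pow (n : ℕ) (h : 2 ≤ n) : n < 3 ^ (n - 1) := by
  have h1 : n - 1 ≤ 3 ^ (n - 2) := by
    have := nat_le_pow (n - 1) (by omega)
    simpa [show n - 1 - 1 = n - 2 by omega] using this
  have h2 : 3 ^ (n - 1) = 3 * 3 ^ (n - 2) := by
    rw [← pow_succ']
    congr 1
    omega
  omega

lemma real_le_pow (n : ℕ) (h : 1 ≤ n) : (n : ℝ) ≤ 3 ^ (n - 1) := by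
  have := nat_le_pow n h
  exact_mod_cast this

lemma real_lt_pow (n : ℕ) (h : 2 ≤ n) : (n : ℝ) < 3 ^ (n - 1) := by
  have := nat_lt_pow n h
  exact_mod_cast this

lemma one_le_gprod (L : List ℕ) : (1 : ℝ) ≤ (L.map g).prod := by
  induction L with
  | nil => simp
  | cons a L ih =>
    simp only [List.map_cons, List.prod_cons]
    have hg : (1 : ℝ) ≤ g a := by
      unfold g
      exact one_le_pow₀ (by norm_num)
    nlinarith

lemma fprod_pos (L : List ℕ) : (0 : ℝ) < (L.map f).prod := by
  induction L with
  | nil => simp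
  | cons a L ih =>
    simp only [List.map_cons, List.prod_cons]
    have hf : (0 : ℝ) < f a := by
      unfold f
      positivity
    positivity

lemma key_s16 (A B : ℝ) (hB : 0 < B) (hBA : B ≤ A) :
    ∀ L : List ℕ, L ≠ [] → (∀ x ∈ L, 1 ≤ x) →
      (A * (L.map f).prod + B * (L.map g).prod ≤ A * 3 ^ L.sum + B) ∧
      ((∃ x ∈ L, x ≠ 1) →
        A * (L.map f).prod + B * (L.map g).prod < A * 3 ^ L.sum + B) := by
  intro L
  induction L with
  | nil => intro h; exact absurd rfl h
  | cons a L ih =>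
    intro _ hmem
    have ha : 1 ≤ a := hmem a (by simp)
    have hA : 0 < A := lt_of_lt_of_le hB hBA
    have ht1 : (1:ℝ) ≤ 3 ^ (a - 1) := one_le_pow₀ (by norm_num)
    have hat : (a:ℝ) ≤ 3 ^ (a - 1) := real_le_pow a ha
    have h3a : (3:ℝ) ^ a = 3 * 3 ^ (a - 1) := by
      rw [← pow_succ']; congr 1; omega
    cases L with
    | nil =>
      simp only [List.map_cons, List.map_nil, List.prod_cons, List.prod_nil, mul_one,
        List.sum_cons, List.sum_nil, Nat.add_zero]
      rw [h3a]
      unfold f g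
      constructor
      · nlinarith [mul_nonneg (sub_nonneg.2 hBA) (sub_nonneg.2 ht1)]
      · rintro ⟨x, hx, hxne⟩
        simp only [List.mem_singleton] at hx
        subst hx
        have ha2 : 2 ≤ x := by omega
        have hat' : (x:ℝ) < 3 ^ (x - 1) := real_lt_pow x ha2
        nlinarith [mul_nonneg (sub_nonneg.2 hBA) (sub_nonneg.2 ht1)]
    | cons b L' =>
      have hmem' : ∀ x ∈ b :: L', 1 ≤ x := fun x hx => hmem x (List.mem_cons_of_mem a hx)
      obtain ⟨hle, hlt⟩ := ih (by simp) hmem'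
      have hQ1 : (1:ℝ) ≤ ((b :: L').map g).prod := one_le_gprod _
      have hP0 : (0:ℝ) < ((b :: L').map f).prod := fprod_pos _
      have hS1 : 1 ≤ (b :: L').sum := by
        have := hmem' b (by simp)
        simp only [List.sum_cons]
        omega
      have hu : (3:ℝ) ≤ 3 ^ (b :: L').sum := by
        calc (3:ℝ) = 3 ^ 1 := (pow_one 3).symm
        _ ≤ 3 ^ (b :: L').sum := pow_le_pow_right₀ (by norm_num) hS1
      have hsum3 : (3:ℝ) ^ (a :: b :: L').sum = 3 ^ (a - 1) * (3 * 3 ^ (b :: L').sum) := by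
        rw [List.sum_cons, show a + (b :: L').sum = (a - 1) + ((b :: L').sum + 1) by omega,
          pow_add, pow_succ']
      set P := ((b :: L').map f).prod with hPdef
      set Q := ((b :: L').map g).prod with hQdef
      set u := (3:ℝ) ^ (b :: L').sum
      set t := (3:ℝ) ^ (a - 1)
      have hgoalf : ((a :: b :: L').map f).prod = f a * P := by
        rw [hPdef, List.map_cons, List.prod_cons]
      have hgoalg : ((a :: b :: L').map g).prod = g a * Q := by
        rw [hQdef, List.map_cons, List.prod_cons]
      rw [hgoalf, hgoalg, hsum3]
      have hfa : f a = t + a + 1 := rfl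
      have hga : g a = t := rfl
      rw [hfa, hga]
      have ha1 : (1:ℝ) ≤ (a:ℝ) := by exact_mod_cast ha
      have h3 : (0:ℝ) ≤ (t + a + 1) * ((A * u + B) - (A * P + B * Q)) :=
        mul_nonneg (by linarith) (by linarith)
      have h4 : (0:ℝ) ≤ B * ((a:ℝ) + 1) * (Q - 1) :=
        mul_nonneg (mul_nonneg hB.le (by linarith)) (by linarith)
      have h2 : (0:ℝ) ≤ A * (t - a) * u :=
        mul_nonneg (mul_nonneg hA.le (by linarith)) (by linarith)
      have h5 : (0:ℝ) ≤ A * (t - 1) * (u - 1) :=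
        mul_nonneg (mul_nonneg hA.le (by linarith)) (by linarith)
      have h1 : (0:ℝ) ≤ (A - B) * (t - 1) :=
        mul_nonneg (by linarith) (by linarith)
      clear ih hmem hmem' h3a
      constructor
      · nlinarith [h1, h2, h3, h4, h5]
      · rintro ⟨x, hx, hxne⟩
        rcases List.mem_cons.mp hx with hxa | hxtail
        · have ha2 : 2 ≤ a := by omega
          have hat' : (a:ℝ) < t := real_lt_pow a ha2
          have h2' : (0:ℝ) < A * (t - a) * u :=
            mul_pos (mul_pos hA (by linarith)) (by linarith)
          clear hlt hle hx
          nlinarith [h1, h2', h3, h4, h5]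
        · have hstrict : A * P + B * Q < A * u + B := hlt ⟨x, hxtail, hxne⟩
          have h3' : (0:ℝ) < (t + a + 1) * ((A * u + B) - (A * P + B * Q)) :=
            mul_pos (by linarith) (by linarith)
          clear hlt hle hx hstrict
          nlinarith [h1, h2, h3', h4, h5]

theorem lem_2_10_i (m l i : ℕ) (hl : 4 ≤ l) (hm : l + 3 ≤ m) (hmod : (m - l) % 3 = 1)
    (hi : 1 ≤ i) (k : Fin i → ℕ) (hk : ∀ j, 1 ≤ k j)
    (hsum : ∑ j, k j = (m - l - 1) / 3) :
    1 / 18 * ((l : ℝ) + 2) * ((l : ℝ) + 5) * ∏ j, f (k j)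
        + 1 / 3 * ((l : ℝ) - 1) * ∏ j, g (k j)
      ≤ 1 / 18 * ((l : ℝ) + 2) * ((l : ℝ) + 5) * 3 ^ ((m - l - 1) / 3)
        + 1 / 3 * ((l : ℝ) - 1) ∧
    (1 / 18 * ((l : ℝ) + 2) * ((l : ℝ) + 5) * ∏ j, f (k j)
        + 1 / 3 * ((l : ℝ) - 1) * ∏ j, g (k j)
      = 1 / 18 * ((l : ℝ) + 2) * ((l : ℝ) + 5) * 3 ^ ((m - l - 1) / 3)
        + 1 / 3 * ((l : ℝ) - 1)
      ↔ i = (m - l - 1) / 3) := by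
  set N := (m - l - 1) / 3 with hN
  set A : ℝ := 1 / 18 * ((l : ℝ) + 2) * ((l : ℝ) + 5) with hAdef
  set B : ℝ := 1 / 3 * ((l : ℝ) - 1) with hBdef
  have hl4 : (4:ℝ) ≤ (l:ℝ) := by exact_mod_cast hl
  have hB : 0 < B := by rw [hBdef]; nlinarith
  have hBA : B ≤ A := by rw [hBdef, hAdef]; nlinarith
  set L := List.ofFn k with hL
  have hLne : L ≠ [] := by
    intro h
    have hlen : L.length = i := List.length_ofFn
    rw [h] at hlen
    simp at hlen
    omega
  have hmemL : ∀ x ∈ L, 1 ≤ x := by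
    intro x hx
    rw [hL, List.mem_ofFn] at hx
    obtain ⟨j, rfl⟩ := hx
    exact hk j
  have hsumL : L.sum = N := by rw [hL, List.sum_ofFn]; exact hsum
  have hprodf : (L.map f).prod = ∏ j, f (k j) := by
    rw [hL, List.map_ofFn, List.prod_ofFn]; rfl
  have hprodg : (L.map g).prod = ∏ j, g (k j) := by
    rw [hL, List.map_ofFn, List.prod_ofFn]; rfl
  obtain ⟨hle, hlt⟩ := key_s16 A B hB hBA L hLne hmemL
  rw [hprodf, hprodg, hsumL] at hle hlt
  have hileN : i ≤ N := by
    have h1 : ∑ j : Fin i, 1 ≤ ∑ j, k j := Finset.sum_le_sum (fun j _ => hk j)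
    simpa [hsum] using h1
  refine ⟨hle, ?_, ?_⟩
  · intro heq
    by_contra hiN
    have hex : ∃ j, k j ≠ 1 := by
      by_contra h
      push_neg at h
      have : ∑ j, k j = i := by simp [h]
      omega
    obtain ⟨j, hj⟩ := hex
    have hstrict := hlt ⟨k j, by rw [hL, List.mem_ofFn]; exact ⟨j, rfl⟩, hj⟩
    linarith
  · intro hiN
    have hall : ∀ j, k j = 1 := by
      have hsum' : ∑ j : Fin i, 1 = ∑ j, k j := by
        simp [hsum, ← hiN]
      have := (Finset.sum_eq_sum_iff_of_le (fun j (_ : j ∈ Finset.univ) => hk j)).mp hsum'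
      intro j
      exact ((this j (Finset.mem_univ j))).symm
    have h1 : ∏ j, f (k j) = 3 ^ i := by
      have : ∀ j ∈ Finset.univ, f (k j) = 3 := by
        intro j _
        rw [hall j]
        unfold f
        norm_num
      rw [Finset.prod_congr rfl this, Finset.prod_const]
      simp
    have h2 : ∏ j, g (k j) = 1 := by
      have : ∀ j ∈ Finset.univ, g (k j) = 1 := by
        intro j _
        rw [hall j]
        unfold g
        norm_num
      rw [Finset.prod_congr rfl this, Finset.prod_const, one_pow]
    rw [h1, h2, hiN, mul_one]
end

section
/- Define f(x) = 3^{x−1} + x + 1 and g(x) = 3^{x−1}. Let m, l, k₁, …, k_i be positive integers with l ≥ 4, m ≥ l+3, m − l ≡ 0 (mod 3), i ≥ 2 and k₁ + ⋯ + k_i = (m−l)/3. Then (1/18)(l+2)(l+5)·∏_{j=1}^{i} f(k_j) + (1/9)(l−1)(l+2)·∏_{j=1}^{i} g(k_j) + (1/3)(l−1)·[ ∏_{j=1}^{i} g(k_j) + Σ_{r=1}^{i} ∏_{j ≠ r} g(k_j) ] ≤ (1/18)(l+2)(l+5)·3^{(m−l)/3} + (1/9)(m+5)(l−1), with equality if and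 only if i = (m−l)/3. -/
set_option maxHeartbeats 1000000

lemma pow3_ge (a : ℕ) : 2 * a + 1 ≤ 3 ^ a := by
  induction a with
  | zero => simp
  | succ n ih => rw [pow_succ]; nlinarith [ih]

lemma merge (a b : ℕ) : (3^a + a + 2) * (3^b + b + 2) ≤ 3 * (3^(a+b) + (a+b) + 2) := by
  have ha := pow3_ge a; have hb := pow3_ge b
  rw [pow_add]
  zify at *
  nlinarith [mul_nonneg (sub_nonneg.2 ha) (sub_nonneg.2 hb),
    mul_nonneg (sub_nonneg.2 ha) (by positivity : (0:ℤ) ≤ b),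
    mul_nonneg (sub_nonneg.2 hb) (by positivity : (0:ℤ) ≤ a),
    mul_nonneg (by positivity : (0:ℤ) ≤ a) (by positivity : (0:ℤ) ≤ b)]

lemma prodf_le {ι : Type*} (T : Finset ι) (hT : T.Nonempty) (a : ι → ℕ) :
    ∏ j ∈ T, (3^(a j) + a j + 2) ≤
      3^(T.card - 1) * (3^(∑ j ∈ T, a j) + (∑ j ∈ T, a j) + 2) := by
  induction hT using Finset.Nonempty.cons_induction with
  | singleton x => simp
  | cons x T hx hT ih =>
      rw [Finset.prod_cons, Finset.sum_cons, Finset.card_cons]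
      obtain ⟨d, hd⟩ := hT
      have hc : 1 ≤ T.card := Finset.card_pos.2 ⟨d, hd⟩
      calc (3^(a x) + a x + 2) * ∏ j ∈ T, (3^(a j) + a j + 2)
          ≤ (3^(a x) + a x + 2) * (3^(T.card - 1) * (3^(∑ j ∈ T, a j) + (∑ j ∈ T, a j) + 2)) :=
            Nat.mul_le_mul_left _ ih
        _ = 3^(T.card - 1) * ((3^(a x) + a x + 2) * (3^(∑ j ∈ T, a j) + (∑ j ∈ T, a j) + 2)) := by ring
        _ ≤ 3^(T.card - 1) * (3 * (3^(a x + ∑ j ∈ T, a j) + (a x + ∑ j ∈ T, a j) + 2)) :=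
            Nat.mul_le_mul_left _ (merge _ _)
        _ = 3^(T.card - 1 + 1) * (3^(a x + ∑ j ∈ T, a j) + (a x + ∑ j ∈ T, a j) + 2) := by
            rw [pow_succ]; ring
        _ = 3^(T.card + 1 - 1) * (3^(a x + ∑ j ∈ T, a j) + (a x + ∑ j ∈ T, a j) + 2) := by
            congr 2; omega

lemma sumC {ι : Type*} [DecidableEq ι] (T : Finset ι) (hT : T.Nonempty) (a : ι → ℕ) :
    ∑ r ∈ T, ∏ j ∈ T.erase r, 3^(a j) ≤ (T.card - 1) * 3^(∑ j ∈ T, a j) + 1 := by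
  induction hT using Finset.Nonempty.cons_induction with
  | singleton x => simp
  | cons x T hx hT ih =>
      rw [Finset.cons_eq_insert] at *
      rw [Finset.sum_insert hx, Finset.erase_insert hx]
      have hrew : ∀ r ∈ T, ∏ j ∈ (insert x T).erase r, 3^(a j)
          = 3^(a x) * ∏ j ∈ T.erase r, 3^(a j) := by
        intro r hr
        rw [Finset.erase_insert_of_ne (by rintro rfl; exact hx hr)]
        rw [Finset.prod_insert (fun h => hx (Finset.mem_of_mem_erase h))]
      rw [Finset.sum_congr rfl hrew, ← Finset.mul_sum]
      have hPT : ∏ j ∈ T, 3^(a j) = 3^(∑ j ∈ T, a j) := Finset.prod_pow_eq_pow_sum ..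
      rw [hPT, Finset.sum_insert hx, Finset.card_insert_of_notMem hx]
      obtain ⟨d, hd⟩ := hT
      have hc : 1 ≤ T.card := Finset.card_pos.2 ⟨d, hd⟩
      have h1 : 3^(a x) * (∑ r ∈ T, ∏ j ∈ T.erase r, 3^(a j))
          ≤ 3^(a x) * ((T.card - 1) * 3^(∑ j ∈ T, a j) + 1) := Nat.mul_le_mul_left _ ih
      have h2 : 1 ≤ (3:ℕ)^(a x) := Nat.one_le_pow _ _ (by norm_num)
      have h3 : 1 ≤ (3:ℕ)^(∑ j ∈ T, a j) := Nat.one_le_pow _ _ (by norm_num)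
      calc 3^(∑ j ∈ T, a j) + 3^(a x) * (∑ r ∈ T, ∏ j ∈ T.erase r, 3^(a j))
          ≤ 3^(∑ j ∈ T, a j) + 3^(a x) * ((T.card - 1) * 3^(∑ j ∈ T, a j) + 1) := by omega
        _ ≤ (T.card + 1 - 1) * 3^(a x + ∑ j ∈ T, a j) + 1 := by
            rw [Nat.add_sub_cancel, pow_add]
            set e := T.card - 1 with hedef
            have he2 : T.card = e + 1 := by omega
            rw [he2]
            zify
            nlinarith [mul_nonneg (sub_nonneg.2 (by exact_mod_cast h2 : (1:ℤ) ≤ 3^(a x)))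
              (sub_nonneg.2 (by exact_mod_cast h3 : (1:ℤ) ≤ 3^(∑ j ∈ T, a j)))]
set_option maxHeartbeats 1000000

lemma final_main (L P G S I Pf T : ℝ)
    (hL : 4 ≤ L) (hI : 2 ≤ I) (hP : I + 1 ≤ P) (hG : 2*S + 1 ≤ G) (hS : 0 ≤ S)
    (hPf : Pf ≤ P * (G + S + 2)) (hT : T ≤ (I - 1) * G + 1) :
    1/18*(L+2)*(L+5)*Pf + 1/9*(L-1)*(L+2)*G + 1/3*(L-1)*(G+T) + S
      ≤ 1/18*(L+2)*(L+5)*(3*P*G) + 1/9*(L-1)*(L+2) + 1/3*(L-1)*(1+I+S) := by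
  have hA : (0:ℝ) ≤ 1/18*(L+2)*(L+5) := by nlinarith
  have hC : (0:ℝ) ≤ 1/3*(L-1) := by linarith
  have hPI : (0:ℝ) ≤ P - I - 1 := by linarith
  have hGS : (0:ℝ) ≤ G - 1 - 2*S := by linarith
  have h1 : 1/18*(L+2)*(L+5)*Pf ≤ 1/18*(L+2)*(L+5)*(P*(G+S+2)) :=
    mul_le_mul_of_nonneg_left hPf hA
  have h2 : 1/3*(L-1)*T ≤ 1/3*(L-1)*((I-1)*G+1) := mul_le_mul_of_nonneg_left hT hC
  have h2AC : (0:ℝ) ≤ 1/9*(L+2)*(L+5) - 1/3*(L-1) := by nlinarith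
  have hbrk : (0:ℝ) ≤ 2*(1/18*(L+2)*(L+5))*P - 1/9*(L-1)*(L+2) - 1/3*(L-1)*I := by
    nlinarith [mul_nonneg hA hPI, mul_nonneg h2AC (by linarith : (0:ℝ) ≤ I)]
  have hq1 : (0:ℝ) ≤ S * ((L+2)*(L+5) * (P - I - 1)) :=
    mul_nonneg hS (mul_nonneg (by nlinarith) hPI)
  have h3A2C : (0:ℝ) ≤ 1/6*(L+2)*(L+5) - 2/3*(L-1) := by nlinarith
  have hq2 : (0:ℝ) ≤ S * ((I-2) * (1/6*(L+2)*(L+5) - 2/3*(L-1))) :=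
    mul_nonneg hS (mul_nonneg (by linarith) h3A2C)
  have hq3 : (0:ℝ) ≤ S * (1/2*(L+2)*(L+5) - 2/9*(L-1)*(L+2) - (L-1) - 1) := by
    apply mul_nonneg hS; nlinarith
  have hbrkGS : (0:ℝ) ≤ (2*(1/18*(L+2)*(L+5))*P - 1/9*(L-1)*(L+2) - 1/3*(L-1)*I)
      * (G - 1 - 2*S) := mul_nonneg hbrk hGS
  have hkey : (1/18*(L+2)*(L+5)*P - 1/3*(L-1))*S + S
      ≤ (2*(1/18*(L+2)*(L+5))*P - 1/9*(L-1)*(L+2) - 1/3*(L-1)*I) * (G-1) := by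
    linarith [hbrkGS, hq1, hq2, hq3]
  linarith [h1, h2, hkey]

lemma pow3_ge_card (i : ℕ) (hi : 2 ≤ i) : i + 1 ≤ 3 ^ (i - 1) := by
  have := pow3_ge (i - 1); omega

theorem lem_2_10_ii (m l i : ℕ) (hl : 4 ≤ l) (hm : l + 3 ≤ m) (hmod : (m - l) % 3 = 0)
    (hi : 2 ≤ i) (k : Fin i → ℕ) (hk : ∀ j, 1 ≤ k j)
    (hsum : ∑ j, k j = (m - l) / 3) :
    1 / 18 * ((l : ℝ) + 2) * ((l : ℝ) + 5) * ∏ j, f (k j)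
        + 1 / 9 * ((l : ℝ) - 1) * ((l : ℝ) + 2) * ∏ j, g (k j)
        + 1 / 3 * ((l : ℝ) - 1) *
            (∏ j, g (k j) + ∑ r, ∏ j ∈ Finset.univ.erase r, g (k j))
      ≤ 1 / 18 * ((l : ℝ) + 2) * ((l : ℝ) + 5) * 3 ^ ((m - l) / 3)
        + 1 / 9 * ((m : ℝ) + 5) * ((l : ℝ) - 1) ∧
    (1 / 18 * ((l : ℝ) + 2) * ((l : ℝ) + 5) * ∏ j, f (k j)
        + 1 / 9 * ((l : ℝ) - 1) * ((l : ℝ) + 2) * ∏ j, g (k j)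
        + 1 / 3 * ((l : ℝ) - 1) *
            (∏ j, g (k j) + ∑ r, ∏ j ∈ Finset.univ.erase r, g (k j))
      = 1 / 18 * ((l : ℝ) + 2) * ((l : ℝ) + 5) * 3 ^ ((m - l) / 3)
        + 1 / 9 * ((m : ℝ) + 5) * ((l : ℝ) - 1)
      ↔ i = (m - l) / 3) := by
  haveI : Nonempty (Fin i) := ⟨⟨0, by omega⟩⟩
  set n := (m - l) / 3 with hndef
  have hn3 : m = l + 3 * n := by omega
  set a : Fin i → ℕ := fun j => k j - 1 with hadef
  have hka : ∀ j : Fin i, k j = a j + 1 := fun j => by have := hk j; simp only [hadef]; omega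
  set s := ∑ j, a j with hsdef
  have hsum' : n = i + s := by
    rw [← hsum, Finset.sum_congr rfl (fun j _ => hka j), Finset.sum_add_distrib,
      Finset.sum_const, Finset.card_univ, Fintype.card_fin]
    simp only [smul_eq_mul, mul_one]
    omega
  -- rewrites of the products
  have hgj : ∀ j, g (k j) = (3:ℝ)^(a j) := fun j => by
    simp only [g, hka j, Nat.add_sub_cancel]
  have hf : ∏ j, f (k j) = ((∏ j, (3^(a j) + a j + 2) : ℕ) : ℝ) := by
    push_cast
    refine Finset.prod_congr rfl fun j _ => ?_
    simp only [f, hka j, Nat.add_sub_cancel]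
    push_cast
    ring
  have hgp : ∏ j, g (k j) = (3:ℝ)^s := by
    rw [Finset.prod_congr rfl (fun j _ => hgj j), Finset.prod_pow_eq_pow_sum]
  have hered : ∑ r, ∏ j ∈ Finset.univ.erase r, g (k j)
      = ((∑ r, ∏ j ∈ Finset.univ.erase r, 3^(a j) : ℕ) : ℝ) := by
    push_cast
    exact Finset.sum_congr rfl fun r _ => Finset.prod_congr rfl fun j _ => hgj j
  -- bounds, cast to ℝ
  have hcard : (Finset.univ : Finset (Fin i)).card = i := by
    rw [Finset.card_univ, Fintype.card_fin]
  have hPfN := prodf_le Finset.univ Finset.univ_nonempty a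
  have hTN := sumC Finset.univ Finset.univ_nonempty a
  rw [hcard] at hPfN hTN
  have hi1 : (1:ℕ) ≤ i := by omega
  rw [← hsdef] at hPfN hTN
  have hPfR : ((∏ j, (3^(a j) + a j + 2) : ℕ) : ℝ)
      ≤ (3:ℝ)^(i-1) * ((3:ℝ)^s + s + 2) :=
    calc ((∏ j, (3^(a j) + a j + 2) : ℕ) : ℝ)
        ≤ ((3^(i-1) * (3^s + s + 2) : ℕ) : ℝ) := by exact_mod_cast hPfN
      _ = (3:ℝ)^(i-1) * ((3:ℝ)^s + s + 2) := by push_cast; ring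
  have hTR : ((∑ r, ∏ j ∈ Finset.univ.erase r, 3^(a j) : ℕ) : ℝ)
      ≤ ((i:ℝ) - 1) * (3:ℝ)^s + 1 :=
    calc ((∑ r, ∏ j ∈ Finset.univ.erase r, 3^(a j) : ℕ) : ℝ)
        ≤ (((i-1) * 3^s + 1 : ℕ) : ℝ) := by exact_mod_cast hTN
      _ = ((i:ℝ) - 1) * (3:ℝ)^s + 1 := by push_cast [Nat.cast_sub hi1]; ring
  have hP : (i:ℝ) + 1 ≤ (3:ℝ)^(i-1) := by exact_mod_cast pow3_ge_card i hi
  have hG : 2*(s:ℝ) + 1 ≤ (3:ℝ)^s := by exact_mod_cast pow3_ge s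
  have hl4 : (4:ℝ) ≤ (l:ℝ) := by exact_mod_cast hl
  have hiR : (2:ℝ) ≤ (i:ℝ) := by exact_mod_cast hi
  have hSR : (0:ℝ) ≤ (s:ℝ) := by positivity
  have hmain := final_main (l:ℝ) ((3:ℝ)^(i-1)) ((3:ℝ)^s) (s:ℝ) (i:ℝ)
    ((∏ j, (3^(a j) + a j + 2) : ℕ) : ℝ)
    ((∑ r, ∏ j ∈ Finset.univ.erase r, 3^(a j) : ℕ) : ℝ)
    hl4 hiR hP hG hSR hPfR hTR
  -- identify the right-hand sides
  have hpow : (3:ℝ)^n = 3 * (3:ℝ)^(i-1) * (3:ℝ)^s := by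
    rw [show n = 1 + (i-1) + s by omega, pow_add, pow_add, pow_one]
  have hmR : (m:ℝ) = (l:ℝ) + 3*(i:ℝ) + 3*(s:ℝ) := by
    rw [hn3, hsum']; push_cast; ring
  have hRHS : 1 / 18 * ((l : ℝ) + 2) * ((l : ℝ) + 5) * 3 ^ n
        + 1 / 9 * ((m : ℝ) + 5) * ((l : ℝ) - 1)
      = 1/18*((l:ℝ)+2)*((l:ℝ)+5)*(3*((3:ℝ)^(i-1))*((3:ℝ)^s))
        + 1/9*((l:ℝ)-1)*((l:ℝ)+2) + 1/3*((l:ℝ)-1)*(1+(i:ℝ)+(s:ℝ)) := by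
    rw [hpow, hmR]; ring
  rw [hf, hgp, hered, hRHS]
  constructor
  · linarith [hmain, hSR]
  constructor
  · -- equality → i = n
    intro heq
    by_contra hne
    have hs1 : 1 ≤ s := by omega
    have : (1:ℝ) ≤ (s:ℝ) := by exact_mod_cast hs1
    linarith [hmain]
  · -- i = n → equality
    intro hieq
    have hs0 : s = 0 := by omega
    rw [hsdef] at hs0
    have ha0 : ∀ j : Fin i, a j = 0 := by
      intro j
      have := Finset.sum_eq_zero_iff.1 hs0
      exact this j (Finset.mem_univ j)
    have hprodval : (∏ j, (3^(a j) + a j + 2)) = 3^i := by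
      rw [Finset.prod_congr rfl (fun j _ => by rw [ha0 j]; norm_num : ∀ j ∈ Finset.univ, (3^(a j) + a j + 2) = 3)]
      rw [Finset.prod_const, hcard]
    have hsumval : (∑ r, ∏ j ∈ Finset.univ.erase r, 3^(a j)) = i := by
      rw [Finset.sum_congr rfl (fun r _ => Finset.prod_eq_one (fun j _ => by rw [ha0 j, pow_zero]))]
      rw [Finset.sum_const, hcard, smul_eq_mul, mul_one]
    have hs0' : s = 0 := by rw [hsdef]; exact hs0
    have h3i : 3 * (3:ℝ)^(i-1) = (3:ℝ)^i := by
      rw [← pow_succ']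
      congr 1
      omega
    rw [hprodval, hsumval, hs0']
    push_cast
    rw [← h3i]
    ring
end
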